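/- arXiv:2506.23010 — 6 statements merged into one kernel-verified Lean document; each statement's English description precedes it below -/
import Mathlib

section
/- Let d(π,π') = |π| + |π'| - 2|π ∨ π'| on the lattice of partitions of a finite set. Then for any partitions π₁, ..., π_k: d(π₁,π₂) + d(π₂,π₃) + ... + d(π_{k-1},π_k) ≥ |π₁| + |π_k| - 2|π₁ ∨ π₂ ∨ ... ∨ π_k|. -/
/-- The number of blocks of a partition of a finite set, where a partition of `E`
is encoded as a `Setoid E` and its blocks are the equivalence classes. -/
noncomputable def partitionBlocks {E : Type*} (π : Setoid E) : ℤ :=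
  (Nat.card (Quotient π) : ℤ)

/-- The distance `d(π,π') = |π| + |π'| - 2|π ∨ π'|` on the lattice of partitions
of a finite set. -/
noncomputable def partitionDist {E : Type*} (π π' : Setoid E) : ℤ :=
  partitionBlocks π + partitionBlocks π' - 2 * partitionBlocks (π ⊔ π')

/-!
Bounding each step `d(πᵢ, πᵢ₊₁)` from below makes the sum telescope. The bound comes from
semimodularity of the block count, `|a| + |b| ≤ |a ∨ b| + |c|` whenever `c ≤ a` and `c ≤ b`,
applied to `a = π₀ ∨ ⋯ ∨ πᵢ`, `b = πᵢ ∨ πᵢ₊₁`, `c = πᵢ`.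
-/

namespace Setoid

variable {E : Type*}

def merge (t : Setoid E) (x y : E) : Setoid E where
  r u v := t u v ∨ (t u x ∧ t y v) ∨ (t u y ∧ t x v)
  iseqv := by
    refine ⟨fun u => Or.inl (t.refl' u), ?_, ?_⟩
    · rintro u v (h | ⟨h₁, h₂⟩ | ⟨h₁, h₂⟩)
      · exact Or.inl (t.symm' h)
      · exact Or.inr (Or.inr ⟨t.symm' h₂, t.symm' h₁⟩)
      · exact Or.inr (Or.inl ⟨t.symm' h₂, t.symm' h₁⟩)
    · rintro u v w (h | ⟨h₁, h₂⟩ | ⟨h₁, h₂⟩) (h' | ⟨h₁', h₂'⟩ | ⟨h₁', h₂'⟩)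
      · exact Or.inl (t.trans' h h')
      · exact Or.inr (Or.inl ⟨t.trans' h h₁', h₂'⟩)
      · exact Or.inr (Or.inr ⟨t.trans' h h₁', h₂'⟩)
      · exact Or.inr (Or.inl ⟨h₁, t.trans' h₂ h'⟩)
      · exact Or.inr (Or.inl ⟨h₁, h₂'⟩)
      · exact Or.inl (t.trans' h₁ h₂')
      · exact Or.inr (Or.inr ⟨h₁, t.trans' h₂ h'⟩)
      · exact Or.inl (t.trans' h₁ h₂')
      · exact Or.inr (Or.inr ⟨h₁, h₂'⟩)

lemma le_merge (t : Setoid E) (x y : E) : t ≤ t.merge x y :=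
  fun _ _ => Or.inl

lemma merge_rel (t : Setoid E) (x y : E) : t.merge x y x y :=
  Or.inr (Or.inl ⟨t.refl' x, t.refl' y⟩)

lemma merge_le {t s : Setoid E} {x y : E} (hts : t ≤ s) (hxy : s x y) : t.merge x y ≤ s := by
  rintro u v (h | ⟨h₁, h₂⟩ | ⟨h₁, h₂⟩)
  · exact hts h
  · exact s.trans' (hts h₁) (s.trans' hxy (hts h₂))
  · exact s.trans' (hts h₁) (s.trans' (s.symm' hxy) (hts h₂))

lemma sup_merge (a c : Setoid E) (x y : E) : a ⊔ c.merge x y = (a ⊔ c).merge x y :=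
  le_antisymm
    (sup_le (le_sup_left.trans (le_merge _ x y))
      (merge_le (le_sup_right.trans (le_merge _ x y)) (merge_rel _ x y)))
    (merge_le (sup_le_sup_left (le_merge c x y) a)
      ((le_sup_right : c.merge x y ≤ a ⊔ c.merge x y) (merge_rel c x y)))

open Classical in
noncomputable def mergeOption (t : Setoid E) (x y : E) :
    Quotient t → Option (Quotient (t.merge x y)) :=
  fun u => if u = Quotient.mk t y then none else some (map_of_le (t.le_merge x y) u)

lemma mergeOption_injective (t : Setoid E) (x y : E) : (t.mergeOption x y).Injective := by
  intro u v huv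
  induction u, v using Quotient.inductionOn₂ with
  | h u v =>
    simp only [mergeOption] at huv
    split_ifs at huv with hu hv hv
    · exact hu.trans hv.symm
    rcases Quotient.exact (Option.some.inj huv) with h | ⟨-, h⟩ | ⟨h, -⟩
    · exact Quotient.sound h
    · exact absurd (Quotient.sound (t.symm' h)) hv
    · exact absurd (Quotient.sound h) hu

lemma mergeOption_surjective {t : Setoid E} {x y : E} (hxy : ¬ t x y) :
    (t.mergeOption x y).Surjective := by
  have hx : Quotient.mk t x ≠ Quotient.mk t y := fun h => hxy (Quotient.exact h)
  rintro (_ | q)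
  · exact ⟨Quotient.mk t y, if_pos rfl⟩
  induction q using Quotient.inductionOn with
  | h u =>
    by_cases hu : t u y
    · refine ⟨Quotient.mk t x, (if_neg hx).trans (congrArg some (Quotient.sound ?_))⟩
      exact Or.inr (Or.inl ⟨t.refl' x, t.symm' hu⟩)
    · exact ⟨Quotient.mk t u, if_neg fun h => hu (Quotient.exact h)⟩

lemma card_quotient_le_card_merge_add_one [Finite E] (t : Setoid E) (x y : E) :
    Nat.card (Quotient t) ≤ Nat.card (Quotient (t.merge x y)) + 1 :=
  Finite.card_option (α := Quotient (t.merge x y)) ▸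
    Nat.card_le_card_of_injective _ (t.mergeOption_injective x y)

lemma card_quotient_merge_add_one [Finite E] {t : Setoid E} {x y : E} (hxy : ¬ t x y) :
    Nat.card (Quotient (t.merge x y)) + 1 = Nat.card (Quotient t) :=
  Finite.card_option (α := Quotient (t.merge x y)) ▸ (Nat.card_eq_of_bijective _
    ⟨t.mergeOption_injective x y, mergeOption_surjective hxy⟩).symm

instance [Finite E] : Finite (Setoid E) :=
  Finite.of_injective (fun t : Setoid E => (t : E → E → Prop)) fun _ _ => eq_iff_rel_eq.mpr

end Setoid

lemma Fin.iSup_eq_iSup_castSucc_sup_last {α : Type*} [CompleteLattice α] {n : ℕ}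
    (f : Fin (n + 1) → α) : ⨆ i, f i = (⨆ i : Fin n, f i.castSucc) ⊔ f (Fin.last n) := by
  rw [← finSuccEquivLast.symm.iSup_comp, iSup_option, sup_comm]
  simp

section PartitionBlocks

variable {E : Type*} [Finite E]

/-- Merging two blocks of `c` lowers `|c|` by exactly one and `|a ⊔ c|` by at most one, and
every coarsening of `c` is reached by such merges. -/
theorem antitone_partitionBlocks_sub_partitionBlocks_sup (a : Setoid E) :
    Antitone fun c => partitionBlocks c - partitionBlocks (a ⊔ c) := by
  intro c b hcb
  induction c using WellFoundedGT.induction with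
  | _ c ih =>
  by_cases hbc : b ≤ c
  · rw [le_antisymm hcb hbc]
  obtain ⟨x, y, hb, hc⟩ : ∃ x y, b x y ∧ ¬ c x y := by
    simpa [Setoid.le_def] using hbc
  have hlt : c < c.merge x y :=
    lt_of_le_not_ge (c.le_merge x y) fun h => hc (h (c.merge_rel x y))
  have hmerge_le := ih _ hlt (Setoid.merge_le hcb hb)
  have hc_merge := Setoid.card_quotient_merge_add_one hc
  have hsup_merge := (a ⊔ c).card_quotient_le_card_merge_add_one x y
  rw [← Setoid.sup_merge] at hsup_merge
  simp only [partitionBlocks] at *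
  omega

theorem partitionBlocks_add_le {a b c : Setoid E} (hca : c ≤ a) (hcb : c ≤ b) :
    partitionBlocks a + partitionBlocks b ≤ partitionBlocks (a ⊔ b) + partitionBlocks c := by
  have := antitone_partitionBlocks_sub_partitionBlocks_sup a hcb
  simp only [sup_eq_left.mpr hca] at this
  linarith

theorem partitionDist_ge_of_le {p s : Setoid E} (q : Setoid E) (hps : p ≤ s) :
    partitionDist p q ≥ partitionBlocks q - partitionBlocks p -
      2 * (partitionBlocks (s ⊔ q) - partitionBlocks s) := by
  have := partitionBlocks_add_le hps (le_sup_left : p ≤ p ⊔ q)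
  rw [← sup_assoc, sup_eq_left.mpr hps] at this
  unfold partitionDist
  linarith

end PartitionBlocks

/-- for partitions `π 0, …, π k` of a finite set,
`d(π₀,π₁) + ⋯ + d(π_{k-1},π_k) ≥ |π₀| + |π_k| - 2|π₀ ∨ ⋯ ∨ π_k|`. -/
theorem partitionDist_chain_ge {E : Type*} [Finite E] (k : ℕ)
    (π : Fin (k + 1) → Setoid E) :
    ∑ i : Fin k, partitionDist (π i.castSucc) (π i.succ) ≥
      partitionBlocks (π 0) + partitionBlocks (π (Fin.last k)) -
        2 * partitionBlocks (⨆ i, π i) := by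
  induction k with
  | zero => simp [two_mul]
  | succ k ih =>
    have hchain := ih (fun i => π i.castSucc)
    have hstep := partitionDist_ge_of_le (π (Fin.last (k + 1)))
      (le_iSup (fun i : Fin (k + 1) => π i.castSucc) (Fin.last k))
    rw [Fin.sum_univ_castSucc, Fin.iSup_eq_iSup_castSucc_sup_last π]
    simp only [Fin.castSucc_zero, Fin.succ_last, Fin.succ_castSucc] at *
    linarith
end

section
/- Fix a probability measure μ on an interval (a, b) with 0 ≤ a < b, having continuous strictly positive density on (a, b), and a constant C₀ > 0. For every ε > 0 there exists L_ε > 0 such that for all sufficiently large M: if s^{(j)} denotes the j/M-quantile of μ for j = 1, ..., M, then for any nondecreasing sequence 0 ≤ d^{(1)} ≤ ... ≤ d^{(M)} ≤ C₀, there exists a function g : [a,b] → [0, C₀] with g(a) = 0 and |g(x) - g(y)| ≤ L_ε |x - y| for all x, y ∈ [a,b], satisfying (1/M) Σ_{j=1}^M (g(s^{(j)}) - d^{(j)})² ≤ ε. -/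
open MeasureTheory intervalIntegral

-- helper: min of three, Lipschitz step
lemma aux_min3 {p q r p' q' r' c : ℝ} (h1 : p ≤ p' + c) (h2 : q ≤ q' + c) (h3 : r ≤ r' + c) :
    min p (min q r) ≤ min p' (min q' r') + c := by
  have : min p (min q r) ≤ min (p' + c) (min (q' + c) (r' + c)) :=
    min_le_min h1 (min_le_min h2 h3)
  rwa [min_add_add_right, min_add_add_right] at this

-- helper: shifted-sum telescoping bound
lemma aux_sum_shift (C₀ : ℝ) (D : ℕ → ℝ) (hmono : Monotone D) (h0 : 0 ≤ D 0)
    (hC : ∀ n, D n ≤ C₀) (M K : ℕ) :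
    ∑ n ∈ Finset.range M, (D n - D (n - K)) ≤ K * C₀ := by
  have hC0 : 0 ≤ C₀ := le_trans h0 (hC 0)
  have hnn : ∀ n, 0 ≤ D n := fun n => le_trans h0 (hmono (Nat.zero_le n))
  rcases le_or_gt M K with h | h
  · calc ∑ n ∈ Finset.range M, (D n - D (n - K))
        ≤ ∑ n ∈ Finset.range M, C₀ := by
          refine Finset.sum_le_sum fun n _ => ?_
          have := hnn (n - K); have := hC n; linarith
      _ = M * C₀ := by rw [Finset.sum_const, Finset.card_range, nsmul_eq_mul]
      _ ≤ K * C₀ := by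
          apply mul_le_mul_of_nonneg_right _ hC0
          exact_mod_cast h
  · have key : ∑ n ∈ Finset.range (M - K), D n ≤ ∑ n ∈ Finset.range M, D (n - K) := by
      have h1 : ∑ n ∈ Finset.Ico K M, D (n - K) = ∑ n ∈ Finset.range (M - K), D n := by
        rw [Finset.sum_Ico_eq_sum_range]
        exact Finset.sum_congr rfl fun i _ => by congr 1; omega
      rw [← h1]
      apply Finset.sum_le_sum_of_subset_of_nonneg
      · intro n hn; rw [Finset.mem_Ico] at hn; exact Finset.mem_range.2 hn.2
      · intro n _ _; exact hnn _
    rw [Finset.sum_sub_distrib]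
    have h2 : ∑ n ∈ Finset.range M, D n - ∑ n ∈ Finset.range (M - K), D n
        = ∑ n ∈ Finset.Ico (M - K) M, D n := by
      rw [Finset.sum_Ico_eq_sub D (Nat.sub_le M K)]
    have h3 : ∑ n ∈ Finset.Ico (M - K) M, D n ≤ K * C₀ := by
      calc ∑ n ∈ Finset.Ico (M - K) M, D n ≤ ∑ n ∈ Finset.Ico (M - K) M, C₀ :=
            Finset.sum_le_sum fun n _ => hC n
        _ = ((M - (M - K) : ℕ) : ℝ) * C₀ := by
            rw [Finset.sum_const, Nat.card_Ico, nsmul_eq_mul]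
        _ ≤ (K : ℝ) * C₀ := by
            apply mul_le_mul_of_nonneg_right _ hC0
            exact_mod_cast (by omega : M - (M - K) ≤ K)
    linarith

-- helper: a.e. nonnegativity on subintervals
lemma aux_ae_nonneg {a b u v : ℝ} {ρ : ℝ → ℝ} (hpos : ∀ x ∈ Set.Ioo a b, 0 < ρ x)
    (hu : a ≤ u) (hv : v ≤ b) :
    0 ≤ᵐ[MeasureTheory.volume.restrict (Set.Icc u v)] ρ := by
  have H : ∀ᵐ x ∂(MeasureTheory.volume.restrict (Set.Icc u v)), 0 ≤ ρ x := by
    rw [MeasureTheory.ae_restrict_iff' measurableSet_Icc, MeasureTheory.ae_iff]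
    refine MeasureTheory.measure_mono_null (t := ({a, b} : Set ℝ)) ?_ ((Set.countable_insert.2 (Set.countable_singleton b)).measure_zero _)
    intro x hx
    simp only [Set.mem_setOf_eq, not_forall] at hx
    push_neg at hx
    obtain ⟨⟨hux, hxv⟩, hneg⟩ := hx
    have hxIoo : x ∉ Set.Ioo a b := fun hmem => absurd (hpos x hmem) (not_lt.2 hneg.le)
    simp only [Set.mem_Ioo, not_and, not_lt] at hxIoo
    rcases lt_or_ge a x with hax | hax
    · have : b ≤ x := hxIoo hax
      right; exact le_antisymm (le_trans hxv hv) this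
    · left; exact le_antisymm hax (le_trans hu hux)
  exact H

set_option maxHeartbeats 1000000 in
/-- fix `0 ≤ a < b`, a constant `C₀ > 0`, and a probability
density `ρ` on `(a,b)` that is continuous and strictly positive on `(a,b)`
(and integrates to `1` over `[a,b]`).  For every `ε > 0` there exists a
Lipschitz constant `L > 0` (depending only on `ε`, `ρ`, `a`, `b`, `C₀`) and a
threshold `M₀` such that for all `M ≥ M₀`: if `s j` is the `(j+1)/M`-quantile
of the density (`∫_a^{s j} ρ = (j+1)/M` for `j = 0, …, M-1`), then for every
nondecreasing sequence `0 ≤ d 0 ≤ ⋯ ≤ d (M-1) ≤ C₀` there exists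
`g : ℝ → ℝ` with `g a = 0`, `0 ≤ g ≤ C₀` on `[a,b]`, `|g x - g y| ≤ L|x - y|`
on `[a,b]`, and `(1/M) Σ_j (g (s j) - d j)² ≤ ε`. -/
theorem lipschitz_quantile_approximation
    (a b : ℝ) (ha : 0 ≤ a) (hab : a < b) (C₀ : ℝ) (hC₀ : 0 < C₀)
    (ρ : ℝ → ℝ) (hρcont : ContinuousOn ρ (Set.Ioo a b))
    (hρpos : ∀ x ∈ Set.Ioo a b, 0 < ρ x)
    (hρnorm : ∫ x in a..b, ρ x = 1) :
    ∀ ε : ℝ, 0 < ε → ∃ L : ℝ, 0 < L ∧ ∃ M₀ : ℕ, ∀ M : ℕ, M₀ ≤ M →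
      ∀ s : Fin M → ℝ,
        (∀ j, s j ∈ Set.Icc a b) →
        (∀ j : Fin M, ∫ x in a..(s j), ρ x = ((j : ℝ) + 1) / M) →
        ∀ d : Fin M → ℝ,
          Monotone d → (∀ j, 0 ≤ d j) → (∀ j, d j ≤ C₀) →
          ∃ g : ℝ → ℝ, g a = 0 ∧
            (∀ x ∈ Set.Icc a b, 0 ≤ g x ∧ g x ≤ C₀) ∧
            (∀ x ∈ Set.Icc a b, ∀ y ∈ Set.Icc a b, |g x - g y| ≤ L * |x - y|) ∧
            (1 / M : ℝ) * ∑ j, (g (s j) - d j) ^ 2 ≤ ε := by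
  intro ε hε
  -- integrability of ρ on [a,b]
  have hInt : IntervalIntegrable ρ volume a b := by
    by_contra hni
    rw [intervalIntegral.integral_undef hni] at hρnorm
    norm_num at hρnorm
  have hIntSub : ∀ u v : ℝ, u ∈ Set.Icc a b → v ∈ Set.Icc a b →
      IntervalIntegrable ρ volume u v := by
    intro u v hu hv
    refine hInt.mono_set ?_
    rw [Set.uIcc_subset_uIcc_iff_mem, Set.uIcc_of_le hab.le]
    exact ⟨hu, hv⟩
  -- the CDF and its basic properties
  set F : ℝ → ℝ := fun u => ∫ x in a..u, ρ x with hFdef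
  have hFa : F a = 0 := intervalIntegral.integral_same
  have hFb : F b = 1 := hρnorm
  have hFcont : ContinuousOn F (Set.Icc a b) := by
    have := intervalIntegral.continuousOn_primitive_interval' hInt
      (Set.left_mem_uIcc (a := a) (b := b))
    rwa [Set.uIcc_of_le hab.le] at this
  have hFmono : ∀ u v : ℝ, a ≤ u → u ≤ v → v ≤ b → F u ≤ F v := by
    intro u v hu huv hvb
    have hadd := intervalIntegral.integral_add_adjacent_intervals
      (hIntSub a u ⟨le_refl a, hab.le⟩ ⟨hu, le_trans huv hvb⟩)
      (hIntSub u v ⟨hu, le_trans huv hvb⟩ ⟨le_trans hu huv, hvb⟩)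
    have hnn : 0 ≤ ∫ x in u..v, ρ x :=
      intervalIntegral.integral_nonneg_of_ae_restrict huv (aux_ae_nonneg hρpos hu hvb)
    simp only [hFdef]
    linarith [hadd]
  -- the tail-mass parameter
  set η : ℝ := ε / (8 * C₀ ^ 2) with hηdef
  have hη : 0 < η := by positivity
  -- pick a₂ close to a with F a₂ < η
  have hA : ∃ a₂ ∈ Set.Ioo a b, F a₂ < η := by
    have hcw : ContinuousWithinAt F (Set.Icc a b) a :=
      hFcont a ⟨le_refl a, hab.le⟩
    have hev : ∀ᶠ x in nhdsWithin a (Set.Icc a b), F x < η := by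
      have := hcw.tendsto
      rw [hFa] at this
      exact this.eventually_lt_const hη
    have hev' : ∀ᶠ x in nhdsWithin a (Set.Ioo a b), F x < η :=
      hev.filter_mono (nhdsWithin_mono a Set.Ioo_subset_Icc_self)
    haveI : (nhdsWithin a (Set.Ioo a b)).NeBot := by
      apply mem_closure_iff_nhdsWithin_neBot.1
      rw [closure_Ioo hab.ne]
      exact ⟨le_refl a, hab.le⟩
    exact (eventually_mem_nhdsWithin.and hev').exists
  obtain ⟨a₂, ha₂, hFa₂⟩ := hA
  -- pick b₂ close to b (beyond a₂) with F b₂ > 1 - η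
  have hB : ∃ b₂ ∈ Set.Ioo a₂ b, 1 - η < F b₂ := by
    have hcw : ContinuousWithinAt F (Set.Icc a b) b :=
      hFcont b ⟨hab.le, le_refl b⟩
    have hev : ∀ᶠ x in nhdsWithin b (Set.Icc a b), 1 - η < F x := by
      have := hcw.tendsto
      rw [hFb] at this
      exact this.eventually_const_lt (by linarith)
    have hev' : ∀ᶠ x in nhdsWithin b (Set.Ioo a₂ b), 1 - η < F x :=
      hev.filter_mono (nhdsWithin_mono b (fun x hx => Set.mem_Icc.2
        ⟨le_trans ha₂.1.le (Set.mem_Ioo.1 hx).1.le, (Set.mem_Ioo.1 hx).2.le⟩))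
    haveI : (nhdsWithin b (Set.Ioo a₂ b)).NeBot := by
      apply mem_closure_iff_nhdsWithin_neBot.1
      rw [closure_Ioo ha₂.2.ne]
      exact ⟨ha₂.2.le, le_refl b⟩
    exact (eventually_mem_nhdsWithin.and hev').exists
  obtain ⟨b₂, hb₂, hFb₂⟩ := hB
  -- the core interval [a₁, b₁]
  set a₁ : ℝ := (a + a₂) / 2 with ha₁def
  set b₁ : ℝ := (b₂ + b) / 2 with hb₁def
  have ha₁ : a < a₁ ∧ a₁ < a₂ := by constructor <;> (simp only [ha₁def]; linarith [ha₂.1])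
  have hb₁ : b₂ < b₁ ∧ b₁ < b := by constructor <;> (simp only [hb₁def]; linarith [hb₂.2])
  have hcore : Set.Icc a₁ b₁ ⊆ Set.Ioo a b := fun x hx =>
    ⟨lt_of_lt_of_le ha₁.1 hx.1, lt_of_le_of_lt hx.2 hb₁.2⟩
  have ha₁b₁ : a₁ ≤ b₁ := by
    have := ha₂.2; have := hb₂.1
    simp only [ha₁def, hb₁def]; linarith [hb₂.2]
  -- the max R of ρ on the core interval
  obtain ⟨x₀, hx₀mem, hx₀max⟩ :=
    (isCompact_Icc (a := a₁) (b := b₁)).exists_isMaxOn (Set.nonempty_Icc.2 ha₁b₁)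
      (hρcont.mono hcore)
  set R : ℝ := ρ x₀ with hRdef
  have hR : 0 < R := hρpos x₀ (hcore hx₀mem)
  have hRub : ∀ x ∈ Set.Icc a₁ b₁, ρ x ≤ R := fun x hx => hx₀max hx
  -- the Lipschitz constant and the threshold
  refine ⟨max (4 * C₀ ^ 3 * R / ε) (C₀ / (a₂ - a₁)), ?_, Nat.ceil (12 * C₀ ^ 2 / ε) + 1, ?_⟩
  · exact lt_max_of_lt_right (div_pos hC₀ (by linarith [ha₁.2]))
  set L : ℝ := max (4 * C₀ ^ 3 * R / ε) (C₀ / (a₂ - a₁)) with hLdef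
  have hL : 0 < L := lt_max_of_lt_right (div_pos hC₀ (by linarith [ha₁.2]))
  have hLC : C₀ ≤ L * (a₂ - a₁) := by
    have h1 : C₀ / (a₂ - a₁) ≤ L := le_max_right _ _
    rw [div_le_iff₀ (by linarith [ha₁.2] : (0:ℝ) < a₂ - a₁)] at h1
    linarith
  intro M hM s hs hq d hdmono hd0 hdC
  have hMpos : 0 < M := lt_of_lt_of_le (Nat.succ_pos _) hM
  have hMR : (0:ℝ) < M := by exact_mod_cast hMpos
  haveI : Nonempty (Fin M) := ⟨⟨0, hMpos⟩⟩
  set K : ℕ := Nat.ceil (C₀ * M * R / L) with hKdef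
  -- the candidate function: inf-convolution of the data with slope L
  obtain ⟨g, hgdef⟩ : ∃ g' : ℝ → ℝ, g' = fun x => min C₀ (min (L * (x - a))
      (Finset.univ.inf' Finset.univ_nonempty (fun j : Fin M => d j + L * |x - s j|))) :=
    ⟨_, rfl⟩
  have hinf_nonneg : ∀ x : ℝ, 0 ≤ Finset.univ.inf' Finset.univ_nonempty
      (fun j : Fin M => d j + L * |x - s j|) := by
    intro x
    apply Finset.le_inf'
    intro j _
    have h1 := hd0 j
    have h2 : 0 ≤ L * |x - s j| := mul_nonneg hL.le (abs_nonneg _)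
    linarith
  have hga : g a = 0 := by
    simp only [hgdef, sub_self, mul_zero]
    rw [min_eq_left (hinf_nonneg a), min_eq_right hC₀.le]
  have hgC : ∀ x : ℝ, g x ≤ C₀ := by intro x; rw [hgdef]; exact min_le_left _ _
  have hg0 : ∀ x : ℝ, a ≤ x → 0 ≤ g x := by
    intro x hx
    simp only [hgdef]
    exact le_min hC₀.le (le_min (mul_nonneg hL.le (by linarith)) (hinf_nonneg x))
  -- Lipschitz property
  have hlip1 : ∀ x y : ℝ, g x ≤ g y + L * |x - y| := by
    intro x y
    simp only [hgdef]
    obtain ⟨j₀, -, hj₀⟩ := Finset.exists_mem_eq_inf' (Finset.univ_nonempty (α := Fin M))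
      (fun j : Fin M => d j + L * |y - s j|)
    have hc : 0 ≤ L * |x - y| := mul_nonneg hL.le (abs_nonneg _)
    apply aux_min3
    · linarith
    · have h1 : x - y ≤ |x - y| := le_abs_self _
      nlinarith [hL.le]
    · rw [hj₀]
      calc Finset.univ.inf' Finset.univ_nonempty (fun j : Fin M => d j + L * |x - s j|)
          ≤ d j₀ + L * |x - s j₀| := Finset.inf'_le _ (Finset.mem_univ j₀)
        _ ≤ d j₀ + L * |y - s j₀| + L * |x - y| := by
            have h1 : |x - s j₀| ≤ |x - y| + |y - s j₀| := abs_sub_le x y (s j₀)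
            nlinarith [hL.le]
  have hlip : ∀ x y : ℝ, |g x - g y| ≤ L * |x - y| := by
    intro x y
    rw [abs_sub_le_iff]
    refine ⟨by linarith [hlip1 x y], ?_⟩
    have h1 := hlip1 y x
    rw [abs_sub_comm] at h1
    linarith
  -- monotonicity and spacing of the quantiles
  have hdiffInt : ∀ i j : Fin M, ∫ x in (s i)..(s j), ρ x = ((j:ℝ) - (i:ℝ)) / M := by
    intro i j
    have h1 := intervalIntegral.integral_add_adjacent_intervals
      (hIntSub a (s i) ⟨le_refl a, hab.le⟩ (hs i)) (hIntSub (s i) (s j) (hs i) (hs j))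
    rw [hq i, hq j] at h1
    have h2 : ((j:ℝ) + 1)/M - ((i:ℝ)+1)/M = ((j:ℝ) - i)/M := by ring
    linarith
  have hsmono : ∀ i j : Fin M, (i:ℕ) < (j:ℕ) → s i ≤ s j := by
    intro i j hij
    by_contra hlt
    push_neg at hlt
    have h2 : 0 ≤ ∫ x in (s j)..(s i), ρ x :=
      intervalIntegral.integral_nonneg_of_ae_restrict hlt.le
        (aux_ae_nonneg hρpos (hs j).1 (hs i).2)
    rw [hdiffInt j i] at h2
    have hij' : (i:ℝ) < (j:ℝ) := by exact_mod_cast hij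
    have h3 : ((i:ℝ) - j)/M < 0 := div_neg_of_neg_of_pos (by linarith) hMR
    linarith
  have hspace : ∀ i j : Fin M, (i:ℕ) < (j:ℕ) → a₁ ≤ s i → s j ≤ b₁ →
      ((j:ℝ) - i) / M ≤ R * (s j - s i) := by
    intro i j hij hi hj
    have hsij := hsmono i j hij
    have h1 : ∫ x in (s i)..(s j), ρ x ≤ ∫ x in (s i)..(s j), R := by
      apply intervalIntegral.integral_mono_on hsij (hIntSub _ _ (hs i) (hs j))
        intervalIntegrable_const
      intro x hx
      exact hRub x ⟨le_trans hi hx.1, le_trans hx.2 hj⟩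
    rw [hdiffInt i j, intervalIntegral.integral_const, smul_eq_mul] at h1
    linarith [mul_comm (s j - s i) R, h1]
  -- the key lower bound for g at good quantiles
  have hjK : ∀ j : Fin M, (j:ℕ) - K < M := fun j => lt_of_le_of_lt (Nat.sub_le _ _) j.2
  have hkey : ∀ j : Fin M, a₂ ≤ s j → s j ≤ b₂ →
      d ⟨(j:ℕ) - K, hjK j⟩ ≤ g (s j) := by
    intro j hj1 hj2
    simp only [hgdef]
    refine le_min (hdC _) (le_min ?_ ?_)
    · have h2 : L * (a₂ - a₁) ≤ L * (s j - a) := by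
        apply mul_le_mul_of_nonneg_left _ hL.le
        linarith [ha₁.1, ha₁.2]
      exact le_trans (hdC _) (le_trans hLC h2)
    · apply Finset.le_inf'
      intro i _
      rcases le_or_gt ((j:ℕ) - K) (i:ℕ) with hle | hlt
      · have h1 : d ⟨(j:ℕ) - K, hjK j⟩ ≤ d i := hdmono (Fin.le_def.2 hle)
        have h2 : 0 ≤ L * |s j - s i| := mul_nonneg hL.le (abs_nonneg _)
        linarith
      · have hij : (i:ℕ) < (j:ℕ) := lt_of_lt_of_le hlt (Nat.sub_le _ _)
        have hsij : s i ≤ s j := hsmono i j hij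
        have habs : |s j - s i| = s j - s i := abs_of_nonneg (by linarith)
        have hCle : C₀ ≤ L * (s j - s i) := by
          rcases lt_or_ge (s i) a₁ with hia | hia
          · have h2 : L * (a₂ - a₁) ≤ L * (s j - s i) := by
              apply mul_le_mul_of_nonneg_left _ hL.le
              linarith
            exact le_trans hLC h2
          · have hsp := hspace i j hij hia (le_trans hj2 hb₁.1.le)
            have hK1 : C₀ * M * R / L ≤ (K:ℝ) := Nat.le_ceil _
            rw [div_le_iff₀ hL] at hK1
            rw [div_le_iff₀ hMR] at hsp
            have hji : (K:ℝ) + 1 ≤ (j:ℝ) - i := by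
              have h4 : ((K + 1 + i : ℕ) : ℝ) ≤ ((j:ℕ) : ℝ) := Nat.cast_le.2 (by omega)
              push_cast at h4
              linarith
            have e1 : C₀ * M * R ≤ ((j:ℝ) - i) * L :=
              le_trans hK1 (mul_le_mul_of_nonneg_right (by linarith) hL.le)
            have e2 : ((j:ℝ) - i) * L ≤ (R * (s j - s i) * M) * L :=
              mul_le_mul_of_nonneg_right hsp hL.le
            have e3 : C₀ * (M * R) ≤ (L * (s j - s i)) * (M * R) := by linarith [e1, e2]
            exact le_of_mul_le_mul_right e3 (mul_pos hMR hR)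
        have h5 := hd0 i
        have h6 := hdC (⟨(j:ℕ) - K, hjK j⟩ : Fin M)
        rw [habs]
        linarith
  refine ⟨g, hga, fun x hx => ⟨hg0 x hx.1, hgC x⟩, fun x _ y _ => hlip x y, ?_⟩
  -- per-index facts
  have hgle : ∀ j : Fin M, g (s j) ≤ d j := by
    intro j
    calc g (s j) ≤ Finset.univ.inf' Finset.univ_nonempty
          (fun i : Fin M => d i + L * |s j - s i|) := by
            rw [hgdef]
            exact le_trans (min_le_right _ _) (min_le_right _ _)
      _ ≤ d j + L * |s j - s j| := Finset.inf'_le _ (Finset.mem_univ j)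
      _ = d j := by rw [sub_self, abs_zero, mul_zero, add_zero]
  have hsq : ∀ j : Fin M, (g (s j) - d j)^2 ≤ C₀ * (d j - g (s j)) := by
    intro j
    have h1 := hgle j
    have h2 := hg0 (s j) (hs j).1
    have h3 := hdC j
    have h4 : 0 ≤ (d j - g (s j)) * (C₀ - (d j - g (s j))) :=
      mul_nonneg (by linarith) (by linarith)
    have h5 : (g (s j) - d j)^2 = (d j - g (s j)) * (d j - g (s j)) := by ring
    have h6 : (d j - g (s j)) * (C₀ - (d j - g (s j)))
        = C₀ * (d j - g (s j)) - (d j - g (s j)) * (d j - g (s j)) := by ring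
    linarith
  -- counting the bad indices
  set c₁ : ℕ := Nat.ceil (η * M) with hc₁def
  have hbadsub : ∀ j : Fin M, s j ∉ Set.Icc a₂ b₂ → ((j:ℕ) < c₁ ∨ M - c₁ ≤ (j:ℕ)) := by
    intro j hj
    rw [Set.mem_Icc, not_and_or] at hj
    push_neg at hj
    have h2 : F (s j) = ((j:ℝ) + 1) / M := by rw [hFdef]; exact hq j
    rcases hj with hj | hj
    · left
      have h1 : F (s j) ≤ F a₂ := hFmono (s j) a₂ (hs j).1 hj.le ha₂.2.le
      have h3 : ((j:ℝ) + 1) / M < η := by rw [← h2]; exact lt_of_le_of_lt h1 hFa₂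
      rw [div_lt_iff₀ hMR] at h3
      exact Nat.lt_ceil.2 (by linarith)
    · have h1 : F b₂ ≤ F (s j) := hFmono b₂ (s j) (le_trans ha₂.1.le hb₂.1.le) hj.le (hs j).2
      have h3 : 1 - η < ((j:ℝ) + 1) / M := by rw [← h2]; exact lt_of_lt_of_le hFb₂ h1
      rw [lt_div_iff₀ hMR] at h3
      have hjM : (j:ℕ) < M := j.2
      have h5 : ((M - 1 - (j:ℕ) : ℕ) : ℝ) = (M:ℝ) - ((j:ℕ):ℝ) - 1 := by
        have h6 : (M - 1 - (j:ℕ)) + ((j:ℕ) + 1) = M := by omega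
        have h7 : ((M - 1 - (j:ℕ) : ℕ) : ℝ) + ((j:ℕ):ℝ) + 1 = (M:ℝ) := by exact_mod_cast h6
        linarith
      have h8 : M - 1 - (j:ℕ) < c₁ := Nat.lt_ceil.2 (by rw [h5]; linarith)
      right
      omega
  classical
  set P : Fin M → Prop := fun j => s j ∈ Set.Icc a₂ b₂ with hPdef
  have hsplit := Finset.sum_filter_add_sum_filter_not Finset.univ P (fun j => d j - g (s j))
  have hcard : ((Finset.univ.filter (fun j => ¬ P j)).card : ℝ) ≤ 2 * (η * M + 1) := by
    have hsub : Finset.univ.filter (fun j : Fin M => ¬ P j) ⊆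
        (Finset.univ.filter (fun j : Fin M => (j:ℕ) < c₁)) ∪
        (Finset.univ.filter (fun j : Fin M => M - c₁ ≤ (j:ℕ))) := by
      intro j hj
      rw [Finset.mem_filter] at hj
      rcases hbadsub j hj.2 with h | h
      · exact Finset.mem_union_left _ (Finset.mem_filter.2 ⟨Finset.mem_univ _, h⟩)
      · exact Finset.mem_union_right _ (Finset.mem_filter.2 ⟨Finset.mem_univ _, h⟩)
    have hc1 : (Finset.univ.filter (fun j : Fin M => (j:ℕ) < c₁)).card ≤ c₁ := by
      have h0 : (Finset.univ.filter (fun j : Fin M => (j:ℕ) < c₁)).card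
          ≤ (Finset.range c₁).card := by
        apply Finset.card_le_card_of_injOn (fun j : Fin M => (j:ℕ))
        · intro j hj
          exact Finset.mem_range.2 (Finset.mem_filter.1 hj).2
        · intro x _ y _ h
          exact Fin.val_injective h
      simpa using h0
    have hc2 : (Finset.univ.filter (fun j : Fin M => M - c₁ ≤ (j:ℕ))).card ≤ c₁ := by
      have h0 : (Finset.univ.filter (fun j : Fin M => M - c₁ ≤ (j:ℕ))).card
          ≤ (Finset.range c₁).card := by
        apply Finset.card_le_card_of_injOn (fun j : Fin M => (j:ℕ) - (M - c₁))
        · intro j hj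
          have h1 : M - c₁ ≤ (j:ℕ) := (Finset.mem_filter.1 hj).2
          have h2 := j.2
          exact Finset.mem_range.2 (by show (j:ℕ) - (M - c₁) < c₁; omega)
        · intro x hx y hy h
          simp only [Finset.coe_filter, Set.mem_setOf_eq] at hx hy
          have h' : (x:ℕ) - (M - c₁) = (y:ℕ) - (M - c₁) := h
          have h3 := x.2
          have h4 := y.2
          apply Fin.val_injective
          omega
      simpa using h0
    have h6 : (Finset.univ.filter (fun j : Fin M => ¬ P j)).card ≤ c₁ + c₁ :=
      le_trans (Finset.card_le_card hsub)
        (le_trans (Finset.card_union_le _ _) (add_le_add hc1 hc2))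
    have h7 : (c₁ : ℝ) < η * M + 1 := by
      have h8 := Nat.ceil_lt_add_one (by positivity : (0:ℝ) ≤ η * M)
      exact_mod_cast h8
    calc ((Finset.univ.filter (fun j => ¬ P j)).card : ℝ) ≤ ((c₁ + c₁ : ℕ) : ℝ) :=
          Nat.cast_le.2 h6
      _ ≤ 2 * (η * M + 1) := by push_cast; linarith
  have hBad : ∑ j ∈ Finset.univ.filter (fun j => ¬ P j), (d j - g (s j))
      ≤ 2 * (η * M + 1) * C₀ := by
    calc ∑ j ∈ Finset.univ.filter (fun j => ¬ P j), (d j - g (s j))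
        ≤ ∑ j ∈ Finset.univ.filter (fun j => ¬ P j), C₀ := by
          refine Finset.sum_le_sum fun j _ => ?_
          have h1 := hdC j; have h2 := hg0 (s j) (hs j).1; linarith
      _ = ((Finset.univ.filter (fun j => ¬ P j)).card : ℝ) * C₀ := by
          rw [Finset.sum_const, nsmul_eq_mul]
      _ ≤ 2 * (η * M + 1) * C₀ := mul_le_mul_of_nonneg_right hcard hC₀.le
  -- the good indices, via the shifted-sum bound
  set D : ℕ → ℝ := fun n => if h : n < M then d ⟨n, h⟩ else C₀ with hDdef
  have hDmono : Monotone D := by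
    intro m n hmn
    simp only [hDdef]
    by_cases hm : m < M
    · by_cases hn : n < M
      · rw [dif_pos hm, dif_pos hn]; exact hdmono (Fin.mk_le_mk.2 hmn)
      · rw [dif_pos hm, dif_neg hn]; exact hdC _
    · have hn : ¬ n < M := fun h => hm (lt_of_le_of_lt hmn h)
      rw [dif_neg hm, dif_neg hn]
  have hD0 : 0 ≤ D 0 := by
    simp only [hDdef]; rw [dif_pos hMpos]; exact hd0 _
  have hDC : ∀ n, D n ≤ C₀ := by
    intro n; simp only [hDdef]; split_ifs with h
    · exact hdC _
    · exact le_refl C₀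
  have hGood : ∑ j ∈ Finset.univ.filter P, (d j - g (s j)) ≤ (K:ℝ) * C₀ := by
    have h1 : ∑ j ∈ Finset.univ.filter P, (d j - g (s j))
        ≤ ∑ j ∈ Finset.univ.filter P, (d j - d ⟨(j:ℕ) - K, hjK j⟩) := by
      refine Finset.sum_le_sum fun j hj => ?_
      have hjP : s j ∈ Set.Icc a₂ b₂ := (Finset.mem_filter.1 hj).2
      have h2 := hkey j hjP.1 hjP.2
      linarith
    have h2 : ∑ j ∈ Finset.univ.filter P, (d j - d ⟨(j:ℕ) - K, hjK j⟩)
        ≤ ∑ j : Fin M, (d j - d ⟨(j:ℕ) - K, hjK j⟩) := by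
      apply Finset.sum_le_sum_of_subset_of_nonneg (Finset.filter_subset _ _)
      intro j _ _
      have h3 : d (⟨(j:ℕ) - K, hjK j⟩ : Fin M) ≤ d j :=
        hdmono (Fin.le_def.2 (Nat.sub_le (j:ℕ) K))
      linarith
    have h3 : ∑ j : Fin M, (d j - d ⟨(j:ℕ) - K, hjK j⟩)
        = ∑ n ∈ Finset.range M, (D n - D (n - K)) := by
      rw [← Fin.sum_univ_eq_sum_range (fun n => D n - D (n - K)) M]
      refine Finset.sum_congr rfl fun j _ => ?_
      simp only [hDdef]
      rw [dif_pos j.2, dif_pos (hjK j)]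
    have h4 := aux_sum_shift C₀ D hDmono hD0 hDC M K
    linarith [h1, h2, h3, h4]
  have hsum : ∑ j : Fin M, (g (s j) - d j)^2
      ≤ C₀ * (2 * (η * M + 1) * C₀ + (K:ℝ) * C₀) := by
    calc ∑ j : Fin M, (g (s j) - d j)^2 ≤ ∑ j : Fin M, C₀ * (d j - g (s j)) :=
          Finset.sum_le_sum fun j _ => hsq j
      _ = C₀ * ∑ j : Fin M, (d j - g (s j)) := by rw [Finset.mul_sum]
      _ ≤ C₀ * (2 * (η * M + 1) * C₀ + (K:ℝ) * C₀) := by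
          apply mul_le_mul_of_nonneg_left _ hC₀.le
          rw [← hsplit]
          linarith [hBad, hGood]
  -- final arithmetic
  have hKub : (K:ℝ) < C₀ * M * R / L + 1 := by
    have h0 := Nat.ceil_lt_add_one (by positivity : (0:ℝ) ≤ C₀ * M * R / L)
    exact_mod_cast h0
  have hL4 : 4 * C₀ ^ 3 * R ≤ L * ε := by
    have h1 : 4 * C₀ ^ 3 * R / ε ≤ L := le_max_left _ _
    rw [div_le_iff₀ hε] at h1
    linarith
  have hM12 : 12 * C₀ ^ 2 ≤ ε * M := by
    have h1 : 12 * C₀ ^ 2 / ε ≤ (Nat.ceil (12 * C₀ ^ 2 / ε) : ℝ) := Nat.le_ceil _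
    have h2 : (Nat.ceil (12 * C₀ ^ 2 / ε) : ℝ) + 1 ≤ (M:ℝ) := by exact_mod_cast hM
    rw [div_le_iff₀ hε] at h1
    have h3 : (Nat.ceil (12 * C₀ ^ 2 / ε) : ℝ) * ε ≤ (M:ℝ) * ε :=
      mul_le_mul_of_nonneg_right (by linarith) hε.le
    calc 12 * C₀ ^ 2 ≤ (Nat.ceil (12 * C₀ ^ 2 / ε) : ℝ) * ε := h1
      _ ≤ (M:ℝ) * ε := h3
      _ = ε * M := by ring
  have hKC : (K:ℝ) * C₀ ^ 2 * 4 ≤ ε * M + 4 * C₀ ^ 2 := by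
    have h2 : (K:ℝ) ≤ C₀ * M * R / L + 1 := hKub.le
    have h3 := mul_le_mul_of_nonneg_right h2 hL.le
    rw [add_mul, div_mul_cancel₀ _ (ne_of_gt hL), one_mul] at h3
    have h4 : 4 * C₀ ^ 3 * R * M ≤ L * ε * M := mul_le_mul_of_nonneg_right hL4 hMR.le
    have h4a := mul_le_mul_of_nonneg_right h3 (by positivity : (0:ℝ) ≤ 4 * C₀ ^ 2)
    have h5 : (K:ℝ) * C₀ ^ 2 * 4 * L ≤ (ε * M + 4 * C₀ ^ 2) * L := by linarith [h4a, h4]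
    exact le_of_mul_le_mul_right h5 hL
  have hfinal : ∑ j : Fin M, (g (s j) - d j)^2 ≤ ε * M := by
    have hC0ne : C₀ ≠ 0 := ne_of_gt hC₀
    have h1 : 2 * (η * M + 1) * C₀ ^ 2 = ε * M / 4 + 2 * C₀ ^ 2 := by
      simp only [hηdef]; field_simp; ring
    have h2 : C₀ * (2 * (η * M + 1) * C₀ + (K:ℝ) * C₀)
        = 2 * (η * M + 1) * C₀ ^ 2 + (K:ℝ) * C₀ ^ 2 := by ring
    linarith [hsum, hKC, hM12, sq_nonneg C₀]
  calc (1/M : ℝ) * ∑ j, (g (s j) - d j)^2 ≤ (1/M) * (ε * M) :=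
        mul_le_mul_of_nonneg_left hfinal (by positivity)
    _ = ε := by field_simp
end

section
/- Consider the tensor contraction val = Σ over index tuples of a product of m alternating tensors T_alt^{k_a} (each of even order k_a ≥ 2) on ℓ shared indices, where each index i ∈ [n] is identified with a pair (j, j') ∈ [M] × [N] and n = MN. Represent val by a two-colored multigraph G_alt on ℓ vertices (one per index), with a red edge for each column-matching constraint 1{j' = j''} and a blue edge for each row-matching constraint 1{j = j''}. Then val = N^{m - Σ_a k_a/2} · N^{c(G_R)} · M^{c(G_B)}, where c(G_R) and c(G_B) are the numbers of connected components of the red and blue subgraphs. -/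
/-- The alternating tensor `T_alt^k` of order `k` on the index set
`[M] × [N]`: `N^{1 - k/2}` times the product over cyclic positions `ℓ` of
indicators matching column indices (`ℓ` even, 0-based) and row indices
(`ℓ` odd), with position `k` identified with position `0`. -/
noncomputable def Talt (M N k : ℕ) (j : Fin k → Fin M × Fin N) : ℝ :=
  (N : ℝ) ^ ((1 : ℝ) - (k : ℝ) / 2) *
    ∏ ℓ : Fin k,
      if ℓ.val % 2 = 0 then
        (if (j ℓ).2 = (j ⟨(ℓ.val + 1) % k, Nat.mod_lt _ ℓ.pos⟩).2 then (1 : ℝ) else 0)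
      else
        (if (j ℓ).1 = (j ⟨(ℓ.val + 1) % k, Nat.mod_lt _ ℓ.pos⟩).1 then (1 : ℝ) else 0)

/-- consider the contraction `val` of `m` alternating tensors
`T_alt^{k a}` (each of even order `k a ≥ 2`) over `L` shared indices valued in
`[M] × [N]`, with slot assignment `π`.  Build the two-colored multigraph
`G_alt` on the `L` index-vertices with a red edge (column-matching constraint)
between `π(a,ℓ)` and `π(a,ℓ+1)` for each even position `ℓ` (0-based) and a
blue edge (row-matching constraint) for each odd position `ℓ`, positions taken
cyclically within each tensor.  Then
`val = N^{m - Σ_a k_a/2} · N^{c(G_R)} · M^{c(G_B)}`, where `c(G_R)`, `c(G_B)`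
count connected components of the red and blue subgraphs on all `L` vertices. -/
theorem alternating_tensor_network_value
    (M N : ℕ) (hM : 0 < M) (hN : 0 < N)
    (m L : ℕ) (k : Fin m → ℕ) (hk : ∀ a, 2 ≤ k a) (hkeven : ∀ a, Even (k a))
    (π : ((a : Fin m) × Fin (k a)) → Fin L) :
    let next : (a : Fin m) → Fin (k a) → Fin (k a) := fun a ℓ =>
      ⟨(ℓ.val + 1) % k a, Nat.mod_lt _ ℓ.pos⟩
    let red : Fin L → Fin L → Prop := fun x y =>
      ∃ (a : Fin m) (ℓ : Fin (k a)), ℓ.val % 2 = 0 ∧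
        π ⟨a, ℓ⟩ = x ∧ π ⟨a, next a ℓ⟩ = y
    let blue : Fin L → Fin L → Prop := fun x y =>
      ∃ (a : Fin m) (ℓ : Fin (k a)), ℓ.val % 2 = 1 ∧
        π ⟨a, ℓ⟩ = x ∧ π ⟨a, next a ℓ⟩ = y
    (∑ i : Fin L → Fin M × Fin N,
        ∏ a : Fin m, Talt M N (k a) (fun s => i (π ⟨a, s⟩)))
      = (N : ℝ) ^ ((m : ℝ) - (∑ a, (k a : ℝ)) / 2) *
          (N : ℝ) ^ (Nat.card (Quotient (Relation.EqvGen.setoid red))) *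
          (M : ℝ) ^ (Nat.card (Quotient (Relation.EqvGen.setoid blue))) := by
  intro next red blue
  classical
  set sr := Relation.EqvGen.setoid red with hsr
  set sb := Relation.EqvGen.setoid blue with hsb
  -- the per-slot constraint
  set Q : (Fin L → Fin M × Fin N) → (a : Fin m) → Fin (k a) → Prop := fun i a ℓ =>
    if ℓ.val % 2 = 0 then
      (i (π ⟨a, ℓ⟩)).2 = (i (π ⟨a, next a ℓ⟩)).2
    else
      (i (π ⟨a, ℓ⟩)).1 = (i (π ⟨a, next a ℓ⟩)).1 with hQ
  have key : ∀ (i : Fin L → Fin M × Fin N) (a : Fin m),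
      Talt M N (k a) (fun s => i (π ⟨a, s⟩)) =
        (N : ℝ) ^ ((1 : ℝ) - (k a : ℝ) / 2) *
        ∏ ℓ : Fin (k a), (if Q i a ℓ then (1 : ℝ) else 0) := by
    intro i a
    unfold Talt
    congr 1
    refine Finset.prod_congr rfl fun ℓ _ => ?_
    by_cases h : ℓ.val % 2 = 0 <;> simp [hQ, h, next]
  -- the structured constraint
  set P : (Fin L → Fin M × Fin N) → Prop := fun i =>
    (∀ x y, Relation.EqvGen red x y → (i x).2 = (i y).2) ∧
    (∀ x y, Relation.EqvGen blue x y → (i x).1 = (i y).1) with hP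
  have hPiff : ∀ i, (∀ a : Fin m, ∀ ℓ : Fin (k a), Q i a ℓ) ↔ P i := by
    intro i
    constructor
    · intro h
      constructor
      · intro x y hxy
        induction hxy with
        | rel x y hr =>
            obtain ⟨a, ℓ, he, hx, hy⟩ := hr
            have := h a ℓ
            rw [hQ] at this
            simp only [if_pos he] at this
            rw [← hx, ← hy]; exact this
        | refl x => rfl
        | symm x y _ ih => exact ih.symm
        | trans x y z _ _ ih1 ih2 => exact ih1.trans ih2
      · intro x y hxy
        induction hxy with
        | rel x y hr =>
            obtain ⟨a, ℓ, he, hx, hy⟩ := hr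
            have := h a ℓ
            rw [hQ] at this
            have hne : ¬ (ℓ.val % 2 = 0) := by omega
            simp only [if_neg hne] at this
            rw [← hx, ← hy]; exact this
        | refl x => rfl
        | symm x y _ ih => exact ih.symm
        | trans x y z _ _ ih1 ih2 => exact ih1.trans ih2
    · rintro ⟨h1, h2⟩ a ℓ
      by_cases h : ℓ.val % 2 = 0
      · simp only [hQ, if_pos h]
        exact h1 _ _ (Relation.EqvGen.rel _ _ ⟨a, ℓ, h, rfl, rfl⟩)
      · simp only [hQ, if_neg h]
        have h1' : ℓ.val % 2 = 1 := by omega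
        exact h2 _ _ (Relation.EqvGen.rel _ _ ⟨a, ℓ, h1', rfl, rfl⟩)
  -- the counting equivalence
  let e : {i : Fin L → Fin M × Fin N // P i} ≃
      (Quotient sb → Fin M) × (Quotient sr → Fin N) :=
    { toFun := fun i =>
        (Quotient.lift (fun x => (i.1 x).1) (fun x y h => i.2.2 x y h),
         Quotient.lift (fun x => (i.1 x).2) (fun x y h => i.2.1 x y h))
      invFun := fun f =>
        ⟨fun x => (f.1 (Quotient.mk sb x), f.2 (Quotient.mk sr x)),
         fun x y h => congrArg f.2 (Quotient.sound h),
         fun x y h => congrArg f.1 (Quotient.sound h)⟩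
      left_inv := fun i => Subtype.ext (funext fun x => rfl)
      right_inv := fun f => by
        apply Prod.ext <;>
          (funext q; induction q using Quotient.ind; rfl) }
  have hcard : (Finset.univ.filter P).card =
      M ^ (Nat.card (Quotient sb)) * N ^ (Nat.card (Quotient sr)) := by
    rw [← Fintype.card_subtype, ← Nat.card_eq_fintype_card, Nat.card_congr e,
      Nat.card_prod, Nat.card_fun, Nat.card_fun]
    simp [Nat.card_eq_fintype_card]
  -- main computation
  calc (∑ i : Fin L → Fin M × Fin N, ∏ a : Fin m, Talt M N (k a) (fun s => i (π ⟨a, s⟩)))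
      = ∑ i : Fin L → Fin M × Fin N,
          ((∏ a : Fin m, (N : ℝ) ^ ((1 : ℝ) - (k a : ℝ) / 2)) *
            ∏ a : Fin m, ∏ ℓ : Fin (k a), (if Q i a ℓ then (1 : ℝ) else 0)) := by
        refine Finset.sum_congr rfl fun i _ => ?_
        rw [← Finset.prod_mul_distrib]
        exact Finset.prod_congr rfl fun a _ => key i a
    _ = (N : ℝ) ^ ((m : ℝ) - (∑ a, (k a : ℝ)) / 2) *
          ∑ i : Fin L → Fin M × Fin N, (if P i then (1 : ℝ) else 0) := by
        rw [← Finset.mul_sum]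
        congr 1
        · rw [← Real.rpow_sum_of_pos (by exact_mod_cast hN)]
          congr 1
          rw [Finset.sum_sub_distrib]
          simp [Finset.sum_div]
        · refine Finset.sum_congr rfl fun i _ => ?_
          simp +zetaDelta only [Finset.prod_boole, Finset.mem_univ, forall_const]
          rw [if_congr (hPiff i) rfl rfl]
    _ = (N : ℝ) ^ ((m : ℝ) - (∑ a, (k a : ℝ)) / 2) *
          (N : ℝ) ^ (Nat.card (Quotient sr)) * (M : ℝ) ^ (Nat.card (Quotient sb)) := by
        rw [Finset.sum_boole, hcard]
        push_cast
        ring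
end

section
/- Let Σ_t ∈ ℝ^{t×t} be symmetric with λ_min(Σ_t) > c > 0, and let Σ_{t+1} ∈ ℝ^{(t+1)×(t+1)} be the positive semidefinite matrix with top-left block Σ_t, off-diagonal column v ∈ ℝ^t with ‖v‖₂ ≤ C, and bottom-right entry σ² ≥ 0 such that Σ_{t+1} is PSD. Then the matrix Σ̄_{t+1} obtained by adding δ² > 0 to the bottom-right entry of Σ_{t+1} satisfies λ_min(Σ̄_{t+1}) ≥ c' for some c' > 0 depending only on c, C, δ. -/
/-- let `Σₜ ∈ ℝ^{t×t}` be symmetric with `λ_min(Σₜ) ≥ c > 0`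
(expressed via the quadratic form), let `v ∈ ℝᵗ` with `‖v‖ ≤ C`, and let
`σ² ≥ 0` be such that the block matrix `[[Σₜ, v], [vᵀ, σ²]]` is positive
semidefinite.  Then adding `δ² > 0` to the bottom-right entry produces a matrix
whose smallest eigenvalue is at least `c' > 0`, where `c'` depends only on
`c, C, δ` (not on `t`, `Σₜ`, `v`, `σ²`).  All matrices act through their
quadratic forms on vectors `(w, wl) ∈ ℝᵗ × ℝ`. -/
theorem block_diag_perturbation_lambdaMin (c C δ : ℝ) (hc : 0 < c) (hC : 0 < C)
    (hδ : 0 < δ) :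
    ∃ c' : ℝ, 0 < c' ∧
      ∀ (t : ℕ) (Sg : Matrix (Fin t) (Fin t) ℝ) (v : Fin t → ℝ) (σsq : ℝ),
        Sg.IsSymm →
        (∀ w : Fin t → ℝ, ∑ i, ∑ j, Sg i j * w i * w j ≥ c * ∑ i, (w i) ^ 2) →
        (∑ i, (v i) ^ 2 ≤ C ^ 2) →
        (0 ≤ σsq) →
        (∀ (w : Fin t → ℝ) (wl : ℝ),
          ∑ i, ∑ j, Sg i j * w i * w j + 2 * wl * ∑ i, v i * w i + σsq * wl ^ 2 ≥ 0) →
        ∀ (w : Fin t → ℝ) (wl : ℝ),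
          ∑ i, ∑ j, Sg i j * w i * w j + 2 * wl * ∑ i, v i * w i
              + (σsq + δ ^ 2) * wl ^ 2 ≥
            c' * (∑ i, (w i) ^ 2 + wl ^ 2) := by
  set l : ℝ := min 1 (δ ^ 2 * c / (4 * C ^ 2)) with hl
  have hl0 : 0 < l := lt_min one_pos (by positivity)
  have hl1 : l ≤ 1 := min_le_left _ _
  have hl2 : l * (2 * C ^ 2 / c) ≤ δ ^ 2 / 2 := by
    have h : l ≤ δ ^ 2 * c / (4 * C ^ 2) := min_le_right _ _
    calc l * (2 * C ^ 2 / c) ≤ (δ ^ 2 * c / (4 * C ^ 2)) * (2 * C ^ 2 / c) :=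
          mul_le_mul_of_nonneg_right h (by positivity)
      _ = δ ^ 2 / 2 := by field_simp; ring
  refine ⟨min (l * c / 2) (δ ^ 2 / 2), lt_min (by positivity) (by positivity), ?_⟩
  intro t Sg v σsq _ hQ hv hσ hPSD w wl
  set a := ∑ i, (w i) ^ 2 with ha
  set s := ∑ i, v i * w i with hs
  set Q := ∑ i, ∑ j, Sg i j * w i * w j with hQd
  have ha0 : 0 ≤ a := Finset.sum_nonneg fun i _ => sq_nonneg _
  have hv0 : 0 ≤ ∑ i, (v i) ^ 2 := Finset.sum_nonneg fun i _ => sq_nonneg _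
  have hcs : s ^ 2 ≤ C ^ 2 * a := by
    have h1 : s ^ 2 ≤ (∑ i, (v i) ^ 2) * ∑ i, (w i) ^ 2 :=
      Finset.sum_mul_sq_le_sq_mul_sq Finset.univ v w
    have h2 : (∑ i, (v i) ^ 2) * ∑ i, (w i) ^ 2 ≤ C ^ 2 * a :=
      mul_le_mul_of_nonneg_right hv ha0
    linarith
  have hkey : 2 * wl * s ≥ -((2 * C ^ 2 / c) * wl ^ 2) - (c / 2) * a := by
    have hsq := sq_nonneg ((2 * C ^ 2 / c) * wl + s)
    have hc2 : (0:ℝ) ≤ c / (2 * C ^ 2) := by positivity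
    have h3 : 0 ≤ (c / (2 * C ^ 2)) * ((2 * C ^ 2 / c) * wl + s) ^ 2 :=
      mul_nonneg hc2 hsq
    have h4 : (c / (2 * C ^ 2)) * s ^ 2 ≤ (c / (2 * C ^ 2)) * (C ^ 2 * a) :=
      mul_le_mul_of_nonneg_left hcs hc2
    have e1 : (c / (2 * C ^ 2)) * ((2 * C ^ 2 / c) * wl + s) ^ 2
        = (2 * C ^ 2 / c) * wl ^ 2 + 2 * wl * s + (c / (2 * C ^ 2)) * s ^ 2 := by
      field_simp; ring
    have e2 : (c / (2 * C ^ 2)) * (C ^ 2 * a) = (c / 2) * a := by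
      field_simp
    linarith [e1 ▸ h3, e2 ▸ h4]
  have h1 := hPSD w wl
  have h2 := hQ w
  have hE1 : Q + 2 * wl * s + (σsq + δ ^ 2) * wl ^ 2 ≥ δ ^ 2 * wl ^ 2 := by nlinarith
  have hE2 : Q + 2 * wl * s + (σsq + δ ^ 2) * wl ^ 2 ≥
      (c / 2) * a + (δ ^ 2 - 2 * C ^ 2 / c) * wl ^ 2 := by nlinarith [sq_nonneg wl]
  have t1 : l * ((c / 2) * a + (δ ^ 2 - 2 * C ^ 2 / c) * wl ^ 2) ≤
      l * (Q + 2 * wl * s + (σsq + δ ^ 2) * wl ^ 2) :=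
    mul_le_mul_of_nonneg_left hE2 hl0.le
  have t2 : (1 - l) * (δ ^ 2 * wl ^ 2) ≤
      (1 - l) * (Q + 2 * wl * s + (σsq + δ ^ 2) * wl ^ 2) :=
    mul_le_mul_of_nonneg_left hE1 (by linarith)
  have m1 : min (l * c / 2) (δ ^ 2 / 2) ≤ l * c / 2 := min_le_left _ _
  have m2 : min (l * c / 2) (δ ^ 2 / 2) ≤ δ ^ 2 / 2 := min_le_right _ _
  nlinarith [t1, t2, hl2, sq_nonneg wl, ha0, m1, m2,
    mul_le_mul_of_nonneg_right m1 ha0, mul_le_mul_of_nonneg_right m2 (sq_nonneg wl),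
    mul_le_mul_of_nonneg_right hl2 (sq_nonneg wl)]
end

section
/- Let g : [0, ∞) → ℝ be L-Lipschitz with g(0) = 0, extended to a spectral function on M×N matrices by g(X) = O g(D) U^T where X = O D U^T is a singular value decomposition and g is applied entrywise to the diagonal singular values. Then for all X, Y ∈ ℝ^{M×N}: ‖g(X) - g(Y)‖_F ≤ L ‖X - Y‖_F. -/
/-- A rectangular `M × N` matrix is "diagonal with nonnegative entries" if all
off-diagonal entries (entries with differing index values) vanish and the
diagonal entries are nonnegative. -/
def IsRectDiagNonneg {M N : ℕ} (D : Matrix (Fin M) (Fin N) ℝ) : Prop :=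
  (∀ i j, i.val ≠ j.val → D i j = 0) ∧ ∀ i j, 0 ≤ D i j

/-- Entrywise application of `g : ℝ → ℝ` to the diagonal of a rectangular
diagonal matrix. -/
def rectDiagMap {M N : ℕ} (g : ℝ → ℝ) (D : Matrix (Fin M) (Fin N) ℝ) :
    Matrix (Fin M) (Fin N) ℝ :=
  fun i j => if i.val = j.val then g (D i j) else 0

/-!
Put `A = Oᵀ O'` and `B = Uᵀ U'`, and let `x, x'` be the diagonals of `D, D'`. By orthogonal
invariance, `‖O D Uᵀ - O' D' U'ᵀ‖² = ∑ x_s² + ∑ x'_t² - 2 ∑_{s,t} x_s A_st B_st x'_t`, and the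
same holds with `g ∘ x, g ∘ x'` in place of `x, x'`. Rows and columns of an orthogonal matrix
are unit vectors, so the weights `A_st B_st` are dominated entrywise by the doubly
substochastic matrix `(A_st² + B_st²) / 2`. As `g` is `L`-Lipschitz with `g 0 = 0`, for
`x, x' ≥ 0` both `(g x ∓ g x')² ≤ L² (x ∓ x')²` hold, i.e.
`2 |L² x x' - g x g x'| ≤ (L² x² - g(x)²) + (L² x'² - g(x')²)`; summing this against the
weights gives the claim.
-/

open Matrix Finset

section Frobenius

variable {R : Type*} [CommRing R] {m n p q p' q' : Type*}
  [Fintype m] [Fintype n] [Fintype p] [Fintype q] [Fintype p'] [Fintype q']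

theorem Matrix.sum_sum_sub_sq (P Q : Matrix m n R) :
    ∑ i, ∑ j, ((P - Q) i j) ^ 2
      = ∑ i, ∑ j, P i j ^ 2 + ∑ i, ∑ j, Q i j ^ 2 - 2 * ∑ i, ∑ j, P i j * Q i j := by
  simp only [sub_apply, mul_sum, ← sum_add_distrib, ← sum_sub_distrib]
  exact sum_congr rfl fun i _ => sum_congr rfl fun j _ => by ring

theorem Matrix.sum_sum_mul_eq_trace (P Q : Matrix m n R) :
    ∑ i, ∑ j, P i j * Q i j = trace (Pᵀ * Q) := by
  simp only [trace, diag, mul_apply, transpose_apply]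
  exact sum_comm

theorem Matrix.sum_sum_mul_mul_mul_transpose (O : Matrix m p R) (Z : Matrix p q R)
    (U : Matrix n q R) (O' : Matrix m p' R) (Z' : Matrix p' q' R) (U' : Matrix n q' R) :
    ∑ i, ∑ j, (O * Z * Uᵀ) i j * (O' * Z' * U'ᵀ) i j
      = ∑ a, ∑ b, Z a b * (Oᵀ * O' * Z' * (Uᵀ * U')ᵀ) a b := by
  simp only [sum_sum_mul_eq_trace, transpose_mul, transpose_transpose, Matrix.mul_assoc]
  rw [trace_mul_comm]
  simp only [Matrix.mul_assoc]

variable [DecidableEq p] [DecidableEq q]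

theorem Matrix.sum_sum_sq_mul_mul_transpose {O : Matrix m p R} {U : Matrix n q R}
    (hO : Oᵀ * O = 1) (hU : Uᵀ * U = 1) (Z : Matrix p q R) :
    ∑ i, ∑ j, (O * Z * Uᵀ) i j ^ 2 = ∑ a, ∑ b, Z a b ^ 2 := by
  simpa only [sq, hO, hU, Matrix.one_mul, Matrix.mul_one, transpose_one]
    using sum_sum_mul_mul_mul_transpose O Z U O Z U

variable [DecidableEq p'] [DecidableEq q']

theorem Matrix.sum_sum_sub_sq_mul_mul_transpose {O : Matrix m p R} {U : Matrix n q R}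
    {O' : Matrix m p' R} {U' : Matrix n q' R}
    (hO : Oᵀ * O = 1) (hU : Uᵀ * U = 1) (hO' : O'ᵀ * O' = 1) (hU' : U'ᵀ * U' = 1)
    (Z : Matrix p q R) (Z' : Matrix p' q' R) :
    ∑ i, ∑ j, ((O * Z * Uᵀ - O' * Z' * U'ᵀ) i j) ^ 2
      = ∑ a, ∑ b, Z a b ^ 2 + ∑ a, ∑ b, Z' a b ^ 2
        - 2 * ∑ a, ∑ b, Z a b * (Oᵀ * O' * Z' * (Uᵀ * U')ᵀ) a b := by
  rw [sum_sum_sub_sq, sum_sum_sq_mul_mul_transpose hO hU, sum_sum_sq_mul_mul_transpose hO' hU',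
    sum_sum_mul_mul_mul_transpose]

end Frobenius

theorem Fintype.sum_comp_le_sum_of_injective {ι κ N : Type*} [Fintype ι] [Fintype κ]
    [AddCommMonoid N] [PartialOrder N] [IsOrderedAddMonoid N] {e : ι → κ}
    (he : Function.Injective e) {f : κ → N} (hf : ∀ j, 0 ≤ f j) : ∑ i, f (e i) ≤ ∑ j, f j :=
  (sum_map univ ⟨e, he⟩ f).symm.trans_le (sum_le_univ_sum_of_nonneg hf)

section Orthogonal

variable {n κ : Type*} [Fintype n] [DecidableEq n] [Fintype κ]

theorem Matrix.transpose_mul_transpose_mul_self_eq_one {R : Type*} [CommRing R]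
    {O O' : Matrix n n R} (hO : Oᵀ * O = 1) (hO' : O'ᵀ * O' = 1) :
    (Oᵀ * O')ᵀ * (Oᵀ * O') = 1 := by
  rw [transpose_mul, transpose_transpose, Matrix.mul_assoc, ← Matrix.mul_assoc O,
    mul_eq_one_comm.mp hO, Matrix.one_mul, hO']

theorem Matrix.sum_apply_sq_eq_one_of_mul_transpose {R : Type*} [Semiring R]
    {A : Matrix n n R} (hA : A * Aᵀ = 1) (i : n) : ∑ j, A i j ^ 2 = 1 := by
  simpa [mul_apply, sq] using congrFun (congrFun hA i) i

variable {R : Type*} [CommRing R] [LinearOrder R] [IsStrictOrderedRing R]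
  {A : Matrix n n R} (hA : Aᵀ * A = 1) {e : κ → n} (he : Function.Injective e)
include hA he

theorem Matrix.sum_submatrix_row_sq_le_one (s : κ) : ∑ t, A.submatrix e e s t ^ 2 ≤ 1 := by
  rw [← sum_apply_sq_eq_one_of_mul_transpose (mul_eq_one_comm.mp hA) (e s)]
  exact Fintype.sum_comp_le_sum_of_injective he (f := fun j => A (e s) j ^ 2)
    fun _ => sq_nonneg _

theorem Matrix.sum_submatrix_col_sq_le_one (t : κ) : ∑ s, A.submatrix e e s t ^ 2 ≤ 1 := by
  rw [← sum_apply_sq_eq_one_of_mul_transpose (A := Aᵀ) (by rwa [transpose_transpose]) (e t)]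
  exact Fintype.sum_comp_le_sum_of_injective he (f := fun i => A i (e t) ^ 2)
    fun _ => sq_nonneg _

end Orthogonal

section DoublySubstochastic

variable {ι κ : Type*} [Fintype ι] [Fintype κ]

theorem sum_sum_two_mul_mul_le_of_sum_sq_le_one {a b F : ι → κ → ℝ} {E : ι → ℝ} {E' : κ → ℝ}
    (hE : ∀ s, 0 ≤ E s) (hE' : ∀ t, 0 ≤ E' t) (hF : ∀ s t, 2 * |F s t| ≤ E s + E' t)
    (ha_row : ∀ s, ∑ t, a s t ^ 2 ≤ 1) (ha_col : ∀ t, ∑ s, a s t ^ 2 ≤ 1)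
    (hb_row : ∀ s, ∑ t, b s t ^ 2 ≤ 1) (hb_col : ∀ t, ∑ s, b s t ^ 2 ≤ 1) :
    ∑ s, ∑ t, 2 * (a s t * b s t * F s t) ≤ ∑ s, E s + ∑ t, E' t := by
  set P : ι → κ → ℝ := fun s t => (a s t ^ 2 + b s t ^ 2) / 2 with hP
  have hrow : ∀ s, ∑ t, P s t ≤ 1 := fun s => by
    simp only [hP, ← sum_div, sum_add_distrib]; linarith [ha_row s, hb_row s]
  have hcol : ∀ t, ∑ s, P s t ≤ 1 := fun t => by
    simp only [hP, ← sum_div, sum_add_distrib]; linarith [ha_col t, hb_col t]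
  calc ∑ s, ∑ t, 2 * (a s t * b s t * F s t)
      ≤ ∑ s, ∑ t, (P s t * E s + P s t * E' t) := by
        gcongr with s _ t _
        have hab : |a s t * b s t| ≤ P s t := by
          simp only [hP, abs_mul]
          rw [← sq_abs (a s t), ← sq_abs (b s t)]
          linarith [two_mul_le_add_sq |a s t| |b s t|]
        calc 2 * (a s t * b s t * F s t) ≤ |a s t * b s t| * (2 * |F s t|) := by
              linarith [abs_mul (a s t * b s t) (F s t), le_abs_self (a s t * b s t * F s t)]
          _ ≤ P s t * (E s + E' t) := by gcongr; exact hF s t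
          _ = _ := by ring
    _ = ∑ s, (∑ t, P s t) * E s + ∑ t, (∑ s, P s t) * E' t := by
        simp only [sum_add_distrib, sum_mul]
        rw [sum_comm (f := fun s t => P s t * E' t)]
    _ ≤ ∑ s, E s + ∑ t, E' t := by
        gcongr with s _ t _
        · exact mul_le_of_le_one_left (hE s) (hrow s)
        · exact mul_le_of_le_one_left (hE' t) (hcol t)

theorem sum_sq_add_sum_sq_sub_le_sq_mul {L : ℝ} {x y : ι → ℝ} {x' y' : κ → ℝ} {a b : ι → κ → ℝ}
    (hy : ∀ s, y s ^ 2 ≤ L ^ 2 * x s ^ 2) (hy' : ∀ t, y' t ^ 2 ≤ L ^ 2 * x' t ^ 2)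
    (hyy' : ∀ s t, 2 * |L ^ 2 * (x s * x' t) - y s * y' t|
      ≤ (L ^ 2 * x s ^ 2 - y s ^ 2) + (L ^ 2 * x' t ^ 2 - y' t ^ 2))
    (ha_row : ∀ s, ∑ t, a s t ^ 2 ≤ 1) (ha_col : ∀ t, ∑ s, a s t ^ 2 ≤ 1)
    (hb_row : ∀ s, ∑ t, b s t ^ 2 ≤ 1) (hb_col : ∀ t, ∑ s, b s t ^ 2 ≤ 1) :
    ∑ s, y s ^ 2 + ∑ t, y' t ^ 2 - 2 * ∑ s, ∑ t, y s * (a s t * b s t) * y' t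
      ≤ L ^ 2 * (∑ s, x s ^ 2 + ∑ t, x' t ^ 2 - 2 * ∑ s, ∑ t, x s * (a s t * b s t) * x' t) := by
  have key := sum_sum_two_mul_mul_le_of_sum_sq_le_one (fun s => sub_nonneg.mpr (hy s))
    (fun t => sub_nonneg.mpr (hy' t)) hyy' ha_row ha_col hb_row hb_col
  have hx_cross : ∑ s, ∑ t, a s t * b s t * (L ^ 2 * (x s * x' t))
      = L ^ 2 * ∑ s, ∑ t, x s * (a s t * b s t) * x' t := by
    simp only [mul_sum]; exact sum_congr rfl fun _ _ => sum_congr rfl fun _ _ => by ring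
  have hy_cross :
      ∑ s, ∑ t, a s t * b s t * (y s * y' t) = ∑ s, ∑ t, y s * (a s t * b s t) * y' t :=
    sum_congr rfl fun _ _ => sum_congr rfl fun _ _ => by ring
  simp only [mul_sub, sum_sub_distrib, ← mul_sum, hx_cross, hy_cross] at key
  linarith

end DoublySubstochastic

section Lipschitz

variable {g : ℝ → ℝ} {L : ℝ} (hg0 : g 0 = 0)
  (hgLip : ∀ x y : ℝ, 0 ≤ x → 0 ≤ y → |g x - g y| ≤ L * |x - y|)
include hg0 hgLip

theorem abs_le_mul_of_lipschitz {x : ℝ} (hx : 0 ≤ x) : |g x| ≤ L * x := by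
  simpa [hg0, abs_of_nonneg hx] using hgLip x 0 hx le_rfl

theorem sq_le_sq_mul_of_lipschitz {x : ℝ} (hx : 0 ≤ x) : g x ^ 2 ≤ L ^ 2 * x ^ 2 := by
  rw [← mul_pow]
  exact sq_le_sq.mpr ((abs_le_mul_of_lipschitz hg0 hgLip hx).trans (le_abs_self _))

theorem two_mul_abs_sub_le_of_lipschitz {x x' : ℝ} (hx : 0 ≤ x) (hx' : 0 ≤ x') :
    2 * |L ^ 2 * (x * x') - g x * g x'|
      ≤ (L ^ 2 * x ^ 2 - g x ^ 2) + (L ^ 2 * x' ^ 2 - g x' ^ 2) := by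
  have hsub : (g x - g x') ^ 2 ≤ (L * (x - x')) ^ 2 := by
    rw [mul_pow, ← sq_abs (x - x'), ← mul_pow]
    exact sq_le_sq.mpr ((hgLip x x' hx hx').trans (le_abs_self _))
  have hadd : (g x + g x') ^ 2 ≤ (L * (x + x')) ^ 2 := by
    refine sq_le_sq.mpr (le_trans ?_ (le_abs_self _))
    linarith [abs_add_le (g x) (g x'), abs_le_mul_of_lipschitz hg0 hgLip hx,
      abs_le_mul_of_lipschitz hg0 hgLip hx']
  rw [← abs_two, ← abs_mul, abs_le]
  constructor <;> linarith

end Lipschitz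

section RectDiag

variable {M N : ℕ} {R : Type*}

def Matrix.IsRectDiag [Zero R] (Z : Matrix (Fin M) (Fin N) R) : Prop :=
  ∀ i j, i.val ≠ j.val → Z i j = 0

def Matrix.rectDiag (Z : Matrix (Fin M) (Fin N) R) (s : Fin (min M N)) : R :=
  Z (Fin.castLE (min_le_left M N) s) (Fin.castLE (min_le_right M N) s)

theorem Matrix.IsRectDiag.sum_sum_eq [AddCommMonoid R] {f : Matrix (Fin M) (Fin N) R}
    (hf : f.IsRectDiag) : ∑ a, ∑ b, f a b = ∑ s, f.rectDiag s := by
  rw [← Fintype.sum_prod_type' (fun a b => f a b)]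
  refine (Fintype.sum_of_injective (fun s => (Fin.castLE (min_le_left M N) s,
      Fin.castLE (min_le_right M N) s)) (fun s t h => ?_) _ _ (fun p hp => hf _ _ ?_)
      fun _ => rfl).symm
  · exact Fin.castLE_injective (min_le_left M N) (Prod.ext_iff.mp h).1
  · refine fun h => hp ⟨⟨p.1, lt_min p.1.isLt (h ▸ p.2.isLt)⟩, ?_⟩
    ext <;> simp [h]

theorem rectDiagMap_isRectDiag (g : ℝ → ℝ) (D : Matrix (Fin M) (Fin N) ℝ) :
    (rectDiagMap g D).IsRectDiag :=
  fun _ _ h => if_neg h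

theorem rectDiag_rectDiagMap (g : ℝ → ℝ) (D : Matrix (Fin M) (Fin N) ℝ) (s : Fin (min M N)) :
    (rectDiagMap g D).rectDiag s = g (D.rectDiag s) :=
  if_pos rfl

variable [CommSemiring R] {Z Z' : Matrix (Fin M) (Fin N) R}

theorem Matrix.IsRectDiag.sum_sum_sq (hZ : Z.IsRectDiag) :
    ∑ a, ∑ b, Z a b ^ 2 = ∑ s, Z.rectDiag s ^ 2 :=
  IsRectDiag.sum_sum_eq (f := fun a b => Z a b ^ 2) fun a b h => by simp [hZ a b h]

theorem Matrix.IsRectDiag.mul_mul_transpose_apply (hZ : Z.IsRectDiag)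
    (A : Matrix (Fin M) (Fin M) R) (B : Matrix (Fin N) (Fin N) R) (i : Fin M) (j : Fin N) :
    (A * Z * Bᵀ) i j = ∑ t, A i (Fin.castLE (min_le_left M N) t) * Z.rectDiag t
      * B j (Fin.castLE (min_le_right M N) t) := by
  calc (A * Z * Bᵀ) i j = ∑ a, ∑ b, A i a * Z a b * B j b := by
        simp only [mul_apply, transpose_apply, sum_mul]
        exact sum_comm
    _ = _ := IsRectDiag.sum_sum_eq (f := fun a b => A i a * Z a b * B j b) fun a b h => by
        simp [hZ a b h]

theorem Matrix.IsRectDiag.sum_sum_mul_mul_mul_transpose (hZ : Z.IsRectDiag)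
    (hZ' : Z'.IsRectDiag) (A : Matrix (Fin M) (Fin M) R) (B : Matrix (Fin N) (Fin N) R) :
    ∑ a, ∑ b, Z a b * (A * Z' * Bᵀ) a b
      = ∑ s, ∑ t, Z.rectDiag s
          * (A.submatrix (Fin.castLE (min_le_left M N)) (Fin.castLE (min_le_left M N)) s t
            * B.submatrix (Fin.castLE (min_le_right M N)) (Fin.castLE (min_le_right M N)) s t)
          * Z'.rectDiag t := by
  rw [IsRectDiag.sum_sum_eq (f := fun a b => Z a b * (A * Z' * Bᵀ) a b) fun a b h => by
    simp [hZ a b h]]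
  refine sum_congr rfl fun s _ => ?_
  simp only [rectDiag, submatrix_apply, hZ'.mul_mul_transpose_apply, mul_sum]
  exact sum_congr rfl fun _ _ => by ring

end RectDiag

theorem spectral_function_lipschitz_frobenius_general
    {M N : ℕ} (L : ℝ) (g : ℝ → ℝ) (hg0 : g 0 = 0)
    (hgLip : ∀ x y : ℝ, 0 ≤ x → 0 ≤ y → |g x - g y| ≤ L * |x - y|)
    (O O' : Matrix (Fin M) (Fin M) ℝ) (U U' : Matrix (Fin N) (Fin N) ℝ)
    (D D' : Matrix (Fin M) (Fin N) ℝ)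
    (hO : O.transpose * O = 1) (hO' : O'.transpose * O' = 1)
    (hU : U.transpose * U = 1) (hU' : U'.transpose * U' = 1)
    (hD : IsRectDiagNonneg D) (hD' : IsRectDiagNonneg D') :
    ∑ i, ∑ j,
        ((O * rectDiagMap g D * U.transpose
          - O' * rectDiagMap g D' * U'.transpose) i j) ^ 2 ≤
      L ^ 2 * ∑ i, ∑ j,
        ((O * D * U.transpose - O' * D' * U'.transpose) i j) ^ 2 := by
  have hA := transpose_mul_transpose_mul_self_eq_one hO hO'
  have hB := transpose_mul_transpose_mul_self_eq_one hU hU'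
  have he₁ := Fin.castLE_injective (min_le_left M N)
  have he₂ := Fin.castLE_injective (min_le_right M N)
  have hgD := rectDiagMap_isRectDiag g D
  have hgD' := rectDiagMap_isRectDiag g D'
  have hD₀ : D.IsRectDiag := hD.1
  have hD₀' : D'.IsRectDiag := hD'.1
  rw [sum_sum_sub_sq_mul_mul_transpose hO hU hO' hU',
    sum_sum_sub_sq_mul_mul_transpose hO hU hO' hU',
    hgD.sum_sum_sq, hgD'.sum_sum_sq, hD₀.sum_sum_sq, hD₀'.sum_sum_sq,
    hgD.sum_sum_mul_mul_mul_transpose hgD', hD₀.sum_sum_mul_mul_mul_transpose hD₀']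
  simp only [rectDiag_rectDiagMap]
  exact sum_sq_add_sum_sq_sub_le_sq_mul
    (fun s => sq_le_sq_mul_of_lipschitz hg0 hgLip (hD.2 _ _))
    (fun t => sq_le_sq_mul_of_lipschitz hg0 hgLip (hD'.2 _ _))
    (fun s t => two_mul_abs_sub_le_of_lipschitz hg0 hgLip (hD.2 _ _) (hD'.2 _ _))
    (sum_submatrix_row_sq_le_one hA he₁) (sum_submatrix_col_sq_le_one hA he₁)
    (sum_submatrix_row_sq_le_one hB he₂) (sum_submatrix_col_sq_le_one hB he₂)

/-- let `g : [0,∞) → ℝ` be `L`-Lipschitz with `g 0 = 0`, and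
extend it to a spectral function on `M × N` matrices by `g(X) = O g(D) Uᵀ`
where `X = O D Uᵀ` is an SVD.  Then for any `X = O D Uᵀ` and `Y = O' D' U'ᵀ`
(singular value decompositions, with `O, U, O', U'` orthogonal and `D, D'`
diagonal with nonnegative entries), the spectral images satisfy
`‖g(X) - g(Y)‖_F ≤ L ‖X - Y‖_F` (stated with squared Frobenius norms). -/
theorem spectral_function_lipschitz_frobenius
    {M N : ℕ} (L : ℝ) (hL : 0 ≤ L) (g : ℝ → ℝ) (hg0 : g 0 = 0)
    (hgLip : ∀ x y : ℝ, 0 ≤ x → 0 ≤ y → |g x - g y| ≤ L * |x - y|)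
    (O O' : Matrix (Fin M) (Fin M) ℝ) (U U' : Matrix (Fin N) (Fin N) ℝ)
    (D D' : Matrix (Fin M) (Fin N) ℝ)
    (hO : O.transpose * O = 1) (hO' : O'.transpose * O' = 1)
    (hU : U.transpose * U = 1) (hU' : U'.transpose * U' = 1)
    (hD : IsRectDiagNonneg D) (hD' : IsRectDiagNonneg D') :
    ∑ i, ∑ j,
        ((O * rectDiagMap g D * U.transpose
          - O' * rectDiagMap g D' * U'.transpose) i j) ^ 2 ≤
      L ^ 2 * ∑ i, ∑ j,
        ((O * D * U.transpose - O' * D' * U'.transpose) i j) ^ 2 :=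
  spectral_function_lipschitz_frobenius_general L g hg0 hgLip O O' U U' D D' hO hO' hU hU' hD hD'
end

section
/- Let G = (V_Id ⊔ V_T, E) be a finite connected bipartite multigraph where every vertex in V_Id has even degree and every edge joins V_Id to V_T. Remove all vertices of a designated subset V_W ⊆ V_T of degree-2 vertices together with their incident edges, duplicate the remaining graph into two disjoint copies, and then merge each vertex of V_Id designated 'bad' with its copy (keeping 'good' vertices distinct). If the original graph minus V_W has N_b components containing a bad vertex and N_g components containing only good vertices, then the resulting graph has exactly N_b + 2·N_g connected components, provided every component contains at least one vertex of V_Id. -/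
/-!
A vertex `(v, b)` of the doubled graph is determined, up to connectivity, by the component `c`
of `v` together with the copy `b`, and the copy stops mattering exactly when `c` contains a bad
vertex: the merge of a bad vertex joins the two copies of its whole component, while every other
edge stays inside one copy. Hence the components of the new graph are in bijection with
`{bad components} ⊕ {good components} × Bool`.
-/

open Relation

section MergeCopies

variable {S : Type*} (P : S → Prop) [DecidablePred P]

def mergeCopies (x : S × Bool) : {c // P c} ⊕ {c // ¬P c} × Bool :=
  if h : P x.1 then .inl ⟨x.1, h⟩ else .inr (⟨x.1, h⟩, x.2)

theorem mergeCopies_eq_iff {a c : S} {b d : Bool} :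
    mergeCopies P (a, b) = mergeCopies P (c, d) ↔ a = c ∧ (P a ∨ b = d) := by
  by_cases ha : P a <;> by_cases hc : P c <;> simp [mergeCopies, ha, hc] <;>
    rintro rfl <;> contradiction

theorem mergeCopies_surjective : Function.Surjective (mergeCopies P) := by
  rintro (⟨c, h⟩ | ⟨⟨c, h⟩, b⟩)
  · exact ⟨(c, false), dif_pos h⟩
  · exact ⟨(c, b), dif_neg h⟩

end MergeCopies

section DuplicateMerge

variable {V : Type*} (r : V → V → Prop) (Bad : Set V)

def dupMergeRel (p q : V × Bool) : Prop :=
  (r p.1 q.1 ∧ p.2 = q.2) ∨ (p.1 = q.1 ∧ p.1 ∈ Bad)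

theorem eqvGen_dupMergeRel_lift {v w : V} (h : EqvGen r v w) (b : Bool) :
    EqvGen (dupMergeRel r Bad) (v, b) (w, b) :=
  Setoid.eqvGen_le (s := (EqvGen.setoid (dupMergeRel r Bad)).comap (·, b))
    (fun _ _ hr => .rel _ _ (.inl ⟨hr, rfl⟩)) h

theorem eqvGen_dupMergeRel_change_copy {u v : V} (hu : u ∈ Bad) (huv : EqvGen r u v)
    (b c : Bool) :
    EqvGen (dupMergeRel r Bad) (v, b) (v, c) :=
  .trans _ (u, b) _ (eqvGen_dupMergeRel_lift r Bad (.symm _ _ huv) b) <|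
    .trans _ (u, c) _ (.rel _ _ (.inr ⟨rfl, hu⟩)) (eqvGen_dupMergeRel_lift r Bad huv c)

def IsBadComponent (c : Quotient (EqvGen.setoid r)) : Prop :=
  ∃ v ∈ Bad, Quotient.mk _ v = c

variable [DecidablePred (IsBadComponent r Bad)]

def dupMergeComponent (p : V × Bool) :
    {c // IsBadComponent r Bad c} ⊕ {c // ¬IsBadComponent r Bad c} × Bool :=
  mergeCopies _ (Quotient.mk _ p.1, p.2)

theorem dupMergeComponent_surjective : Function.Surjective (dupMergeComponent r Bad) :=
  (mergeCopies_surjective _).comp (Quotient.mk_surjective.prodMap Function.surjective_id)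

theorem eqvGen_dupMergeRel_iff {p q : V × Bool} :
    EqvGen (dupMergeRel r Bad) p q ↔ dupMergeComponent r Bad p = dupMergeComponent r Bad q := by
  -- `→`: the kernel of `dupMergeComponent` is an equivalence relation containing `dupMergeRel`.
  refine ⟨fun h => Setoid.eqvGen_le (s := Setoid.ker (dupMergeComponent r Bad)) ?_ h, ?_⟩
  · rintro p q (⟨hr, hb⟩ | ⟨he, hB⟩) <;>
      rw [Setoid.ker_def, dupMergeComponent, dupMergeComponent, mergeCopies_eq_iff]
    · exact ⟨Quotient.sound (.rel _ _ hr), .inr hb⟩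
    · exact ⟨congrArg _ he, .inl ⟨p.1, hB, rfl⟩⟩
  · obtain ⟨v, b⟩ := p
    obtain ⟨w, c⟩ := q
    rw [dupMergeComponent, dupMergeComponent, mergeCopies_eq_iff]
    rintro ⟨hvw, ⟨u, hu, huv⟩ | rfl⟩
    · exact .trans _ _ _ (eqvGen_dupMergeRel_change_copy r Bad hu (Quotient.exact huv) b c)
        (eqvGen_dupMergeRel_lift r Bad (Quotient.exact hvw) c)
    · exact eqvGen_dupMergeRel_lift r Bad (Quotient.exact hvw) b

end DuplicateMerge

theorem duplicate_merge_component_count_general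
    {V : Type*} [Finite V] (r : V → V → Prop)
    (Bad : Set V) :
    let r' : V × Bool → V × Bool → Prop := fun p q =>
      (r p.1 q.1 ∧ p.2 = q.2) ∨ (p.1 = q.1 ∧ p.1 ∈ Bad)
    Nat.card (Quotient (Relation.EqvGen.setoid r')) =
      Nat.card {c : Quotient (Relation.EqvGen.setoid r) //
          ∃ v ∈ Bad, (Quotient.mk (Relation.EqvGen.setoid r) v) = c} +
        2 * Nat.card {c : Quotient (Relation.EqvGen.setoid r) //
          ¬ ∃ v ∈ Bad, (Quotient.mk (Relation.EqvGen.setoid r) v) = c} := by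
  classical
  intro r'
  calc Nat.card (Quotient (EqvGen.setoid r'))
      = Nat.card ({c // IsBadComponent r Bad c} ⊕ {c // ¬IsBadComponent r Bad c} × Bool) :=
        Nat.card_congr <| (Quotient.congrRight fun _ _ => eqvGen_dupMergeRel_iff r Bad).trans
          (Setoid.quotientKerEquivOfSurjective _ (dupMergeComponent_surjective r Bad))
    _ = _ := by
        rw [Nat.card_sum, Nat.card_prod, Nat.card_eq_fintype_card (α := Bool), Fintype.card_bool,
          mul_comm]
        rfl

/-- let a finite graph have vertex set `V` (with adjacency
relation `r`), whose vertices are split into `VId` and its complement, and with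
a set `Bad ⊆ VId` of "bad" vertices of `VId` (the others being "good").
Duplicate the graph into two disjoint copies `V × Bool` and merge each bad
vertex with its copy (modelled by joining `(v, false)` and `(v, true)` for
`v ∈ Bad`).  If every connected component of the original graph contains a
vertex of `VId`, and the original graph has `N_b` components containing a bad
vertex and `N_g` components containing none, then the resulting graph has
exactly `N_b + 2 N_g` connected components.  Connected components are the
equivalence classes of the equivalence relation generated by adjacency. -/
theorem duplicate_merge_component_count
    {V : Type*} [Finite V] (r : V → V → Prop) (hsymm : Symmetric r)
    (VId : Set V) (Bad : Set V) (hBad : Bad ⊆ VId)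
    (hIdcover : ∀ c : Quotient (Relation.EqvGen.setoid r), ∃ v ∈ VId,
      (Quotient.mk (Relation.EqvGen.setoid r) v) = c) :
    let r' : V × Bool → V × Bool → Prop := fun p q =>
      (r p.1 q.1 ∧ p.2 = q.2) ∨ (p.1 = q.1 ∧ p.1 ∈ Bad)
    Nat.card (Quotient (Relation.EqvGen.setoid r')) =
      Nat.card {c : Quotient (Relation.EqvGen.setoid r) //
          ∃ v ∈ Bad, (Quotient.mk (Relation.EqvGen.setoid r) v) = c} +
        2 * Nat.card {c : Quotient (Relation.EqvGen.setoid r) //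
          ¬ ∃ v ∈ Bad, (Quotient.mk (Relation.EqvGen.setoid r) v) = c} :=
  duplicate_merge_component_count_general r Bad
end
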